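/- Let G = N ⋊ T be a semidirect product of a normal subgroup N and a subgroup T. Then I(G) = I(N) ⊕ I(T) ⊕ I(N)I(T) as abelian groups (internal direct sum of additive subgroups of Z[G]). -/

import Mathlib

/-!
Every `g ∈ G` factors uniquely as `g = n t` with `n ∈ N`, `t ∈ T`, and
`g - 1 = (n - 1) + (t - 1) + (n - 1)(t - 1)`, so the three submodules span `I(G)`.
The maps `g ↦ n` and `g ↦ t` induce ℤ-linear endomorphisms `p`, `q` of `ℤ[G]`, and
`p((n - 1)(t - 1)) = (n - 1)(1 - 1) = 0`, `q((n - 1)(t - 1)) = (1 - 1)(t - 1) = 0`.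
So each of `p`, `q`, `1 - p - q` is the identity on one of `I(N)`, `I(T)`, `I(N)I(T)` and
kills the other two, which makes the sum direct.
-/
open MonoidAlgebra

/-- The ℤ-submodule of `ℤ[G]` generated by the elements `h - 1`, `h ∈ H`. -/
noncomputable def relAug (G : Type*) [Group G] (H : Subgroup G) :
    Submodule ℤ (MonoidAlgebra ℤ G) :=
  Submodule.span ℤ {x | ∃ h ∈ H, x = MonoidAlgebra.of ℤ G h - 1}

/-- The augmentation ideal `I(G)` of `ℤ[G]`, as a ℤ-submodule. -/
noncomputable def augI (G : Type*) [Group G] : Submodule ℤ (MonoidAlgebra ℤ G) :=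
  Submodule.span ℤ {x | ∃ g : G, x = MonoidAlgebra.of ℤ G g - 1}

theorem Submodule.inf_eq_bot_of_le_eqLocus_of_le_ker {R M : Type*} [Semiring R]
    [AddCommMonoid M] [Module R M] {A B : Submodule R M} (p : M →ₗ[R] M)
    (hA : A ≤ p.eqLocus LinearMap.id) (hB : B ≤ LinearMap.ker p) : A ⊓ B = ⊥ :=
  eq_bot_iff.mpr fun _ ⟨hxA, hxB⟩ => (Submodule.mem_bot R).mpr ((hA hxA).symm.trans (hB hxB))

namespace MonoidAlgebra

variable {R k G H : Type*} [Semiring R] [Ring k] [Module R k] [Monoid G] [Monoid H]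

theorem of_sub_one_mul_of_sub_one (g h : G) :
    (of k G g - 1) * (of k G h - 1) = (of k G (g * h) - 1) - (of k G g - 1) - (of k G h - 1) := by
  rw [map_mul]; noncomm_ring

theorem mapDomainLinearMap_of_sub_one {f : G → H} (hf : f 1 = 1) (g : G) :
    mapDomainLinearMap R k f (of k G g - 1) = of k H (f g) - 1 := by
  rw [map_sub, ← (of k G).map_one, ← (of k H).map_one]
  simp only [of_apply, mapDomainLinearMap_single, hf]

theorem mapDomainLinearMap_of_sub_one_mul_of_sub_one {f : G → H} (hf : f 1 = 1) {g h : G}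
    (hgh : f (g * h) = f g * f h) :
    mapDomainLinearMap R k f ((of k G g - 1) * (of k G h - 1))
      = (of k H (f g) - 1) * (of k H (f h) - 1) := by
  rw [of_sub_one_mul_of_sub_one, map_sub, map_sub, mapDomainLinearMap_of_sub_one hf,
    mapDomainLinearMap_of_sub_one hf, mapDomainLinearMap_of_sub_one hf, hgh,
    of_sub_one_mul_of_sub_one]

end MonoidAlgebra

section

variable {G : Type*} [Group G]

theorem of_sub_one_mem_augI (g : G) : of ℤ G g - 1 ∈ augI G :=
  Submodule.subset_span ⟨g, rfl⟩

theorem of_sub_one_mem_relAug {H : Subgroup G} {h : G} (hh : h ∈ H) : of ℤ G h - 1 ∈ relAug G H :=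
  Submodule.subset_span ⟨h, hh, rfl⟩

theorem relAug_le_augI (H : Subgroup G) : relAug G H ≤ augI G :=
  Submodule.span_mono fun _ ⟨h, _, hx⟩ => ⟨h, hx⟩

theorem relAug_le {H : Subgroup G} {p : Submodule ℤ (MonoidAlgebra ℤ G)}
    (hp : ∀ h ∈ H, of ℤ G h - 1 ∈ p) : relAug G H ≤ p := by
  rw [relAug, Submodule.span_le]
  rintro _ ⟨h, hh, rfl⟩
  exact hp h hh

theorem relAug_mul_relAug_le {H K : Subgroup G} {p : Submodule ℤ (MonoidAlgebra ℤ G)}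
    (hp : ∀ h ∈ H, ∀ k ∈ K, (of ℤ G h - 1) * (of ℤ G k - 1) ∈ p) :
    relAug G H * relAug G K ≤ p := by
  rw [relAug, relAug, Submodule.span_mul_span, Submodule.span_le]
  rintro _ ⟨_, ⟨h, hh, rfl⟩, _, ⟨k, hk, rfl⟩, rfl⟩
  exact hp h hh k hk

theorem relAug_mul_relAug_le_augI (H K : Subgroup G) : relAug G H * relAug G K ≤ augI G :=
  relAug_mul_relAug_le fun h _ k _ => by
    rw [of_sub_one_mul_of_sub_one]
    exact sub_mem (sub_mem (of_sub_one_mem_augI _) (of_sub_one_mem_augI _)) (of_sub_one_mem_augI _)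

namespace Subgroup.IsComplement'

variable {N T : Subgroup G}

section

variable (hc : N.IsComplement' T)

noncomputable def fst (g : G) : G := (IsComplement.equiv hc g).1

noncomputable def snd (g : G) : G := (IsComplement.equiv hc g).2

theorem fst_mul_snd (g : G) : hc.fst g * hc.snd g = g :=
  IsComplement.equiv_fst_mul_equiv_snd hc g

theorem fst_mem (g : G) : hc.fst g ∈ N := (IsComplement.equiv hc g).1.2

theorem snd_mem (g : G) : hc.snd g ∈ T := (IsComplement.equiv hc g).2.2

theorem fst_mul {n t : G} (hn : n ∈ N) (ht : t ∈ T) : hc.fst (n * t) = n := by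
  rw [fst, IsComplement.equiv_mul_right_of_mem hc ht,
    IsComplement.equiv_fst_eq_self_of_mem_of_one_mem hc T.one_mem hn]

theorem snd_mul {n t : G} (hn : n ∈ N) (ht : t ∈ T) : hc.snd (n * t) = t := by
  rw [snd, IsComplement.equiv_mul_right_of_mem hc ht,
    IsComplement.equiv_snd_eq_one_of_mem_of_one_mem hc T.one_mem hn]
  exact one_mul t

theorem fst_of_mem_left {n : G} (hn : n ∈ N) : hc.fst n = n := by
  simpa using hc.fst_mul hn T.one_mem

theorem snd_of_mem_left {n : G} (hn : n ∈ N) : hc.snd n = 1 := by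
  simpa using hc.snd_mul hn T.one_mem

theorem fst_of_mem_right {t : G} (ht : t ∈ T) : hc.fst t = 1 := by
  simpa using hc.fst_mul N.one_mem ht

theorem snd_of_mem_right {t : G} (ht : t ∈ T) : hc.snd t = t := by
  simpa using hc.snd_mul N.one_mem ht

theorem fst_one : hc.fst 1 = 1 := hc.fst_of_mem_left N.one_mem

theorem snd_one : hc.snd 1 = 1 := hc.snd_of_mem_left N.one_mem

noncomputable def mapFst : MonoidAlgebra ℤ G →ₗ[ℤ] MonoidAlgebra ℤ G :=
  mapDomainLinearMap ℤ ℤ hc.fst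

noncomputable def mapSnd : MonoidAlgebra ℤ G →ₗ[ℤ] MonoidAlgebra ℤ G :=
  mapDomainLinearMap ℤ ℤ hc.snd

theorem relAug_left_le_eqLocus_mapFst : relAug G N ≤ hc.mapFst.eqLocus LinearMap.id :=
  relAug_le fun n hn => by
    rw [LinearMap.mem_eqLocus, LinearMap.id_apply, mapFst,
      mapDomainLinearMap_of_sub_one hc.fst_one, hc.fst_of_mem_left hn]

theorem relAug_right_le_ker_mapFst : relAug G T ≤ LinearMap.ker hc.mapFst :=
  relAug_le fun t ht => by
    rw [LinearMap.mem_ker, mapFst, mapDomainLinearMap_of_sub_one hc.fst_one,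
      hc.fst_of_mem_right ht, map_one, sub_self]

theorem relAug_mul_relAug_le_ker_mapFst : relAug G N * relAug G T ≤ LinearMap.ker hc.mapFst :=
  relAug_mul_relAug_le fun n hn t ht => by
    have hmul : hc.fst (n * t) = hc.fst n * hc.fst t := by
      rw [hc.fst_mul hn ht, hc.fst_of_mem_left hn, hc.fst_of_mem_right ht, mul_one]
    rw [LinearMap.mem_ker, mapFst, mapDomainLinearMap_of_sub_one_mul_of_sub_one hc.fst_one hmul,
      hc.fst_of_mem_right ht, map_one, sub_self, mul_zero]

theorem relAug_right_le_eqLocus_mapSnd : relAug G T ≤ hc.mapSnd.eqLocus LinearMap.id :=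
  relAug_le fun t ht => by
    rw [LinearMap.mem_eqLocus, LinearMap.id_apply, mapSnd,
      mapDomainLinearMap_of_sub_one hc.snd_one, hc.snd_of_mem_right ht]

theorem relAug_left_le_ker_mapSnd : relAug G N ≤ LinearMap.ker hc.mapSnd :=
  relAug_le fun n hn => by
    rw [LinearMap.mem_ker, mapSnd, mapDomainLinearMap_of_sub_one hc.snd_one,
      hc.snd_of_mem_left hn, map_one, sub_self]

theorem relAug_mul_relAug_le_ker_mapSnd : relAug G N * relAug G T ≤ LinearMap.ker hc.mapSnd :=
  relAug_mul_relAug_le fun n hn t ht => by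
    have hmul : hc.snd (n * t) = hc.snd n * hc.snd t := by
      rw [hc.snd_mul hn ht, hc.snd_of_mem_left hn, hc.snd_of_mem_right ht, one_mul]
    rw [LinearMap.mem_ker, mapSnd, mapDomainLinearMap_of_sub_one_mul_of_sub_one hc.snd_one hmul,
      hc.snd_of_mem_left hn, map_one, sub_self, zero_mul]

end

theorem relAug_sup_relAug_sup_mul_eq_augI (hc : N.IsComplement' T) :
    relAug G N ⊔ relAug G T ⊔ relAug G N * relAug G T = augI G := by
  refine le_antisymm (sup_le (sup_le (relAug_le_augI N) (relAug_le_augI T))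
    (relAug_mul_relAug_le_augI N T)) ?_
  rw [augI, Submodule.span_le]
  rintro _ ⟨g, rfl⟩
  have hN := of_sub_one_mem_relAug (hc.fst_mem g)
  have hT := of_sub_one_mem_relAug (hc.snd_mem g)
  have hdecomp : of ℤ G g - 1 = (of ℤ G (hc.fst g) - 1) + (of ℤ G (hc.snd g) - 1)
      + (of ℤ G (hc.fst g) - 1) * (of ℤ G (hc.snd g) - 1) := by
    rw [of_sub_one_mul_of_sub_one, hc.fst_mul_snd]; abel
  rw [SetLike.mem_coe, hdecomp]
  exact add_mem (add_mem (Submodule.mem_sup_left (Submodule.mem_sup_left hN))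
    (Submodule.mem_sup_left (Submodule.mem_sup_right hT)))
    (Submodule.mem_sup_right (Submodule.mul_mem_mul hN hT))

theorem relAug_left_inf_eq_bot (hc : N.IsComplement' T) :
    relAug G N ⊓ (relAug G T ⊔ relAug G N * relAug G T) = ⊥ :=
  Submodule.inf_eq_bot_of_le_eqLocus_of_le_ker hc.mapFst hc.relAug_left_le_eqLocus_mapFst
    (sup_le hc.relAug_right_le_ker_mapFst hc.relAug_mul_relAug_le_ker_mapFst)

theorem relAug_right_inf_eq_bot (hc : N.IsComplement' T) :
    relAug G T ⊓ (relAug G N ⊔ relAug G N * relAug G T) = ⊥ :=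
  Submodule.inf_eq_bot_of_le_eqLocus_of_le_ker hc.mapSnd hc.relAug_right_le_eqLocus_mapSnd
    (sup_le hc.relAug_left_le_ker_mapSnd hc.relAug_mul_relAug_le_ker_mapSnd)

theorem relAug_mul_relAug_inf_eq_bot (hc : N.IsComplement' T) :
    (relAug G N * relAug G T) ⊓ (relAug G N ⊔ relAug G T) = ⊥ := by
  refine Submodule.inf_eq_bot_of_le_eqLocus_of_le_ker (LinearMap.id - hc.mapFst - hc.mapSnd)
    (fun x hx => ?_) (sup_le (fun x hx => ?_) (fun x hx => ?_))
  · have h₁ : hc.mapFst x = 0 := hc.relAug_mul_relAug_le_ker_mapFst hx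
    have h₂ : hc.mapSnd x = 0 := hc.relAug_mul_relAug_le_ker_mapSnd hx
    simp [h₁, h₂]
  · have h₁ : hc.mapFst x = x := hc.relAug_left_le_eqLocus_mapFst hx
    have h₂ : hc.mapSnd x = 0 := hc.relAug_left_le_ker_mapSnd hx
    simp [h₁, h₂]
  · have h₁ : hc.mapFst x = 0 := hc.relAug_right_le_ker_mapFst hx
    have h₂ : hc.mapSnd x = x := hc.relAug_right_le_eqLocus_mapSnd hx
    simp [h₁, h₂]

end Subgroup.IsComplement'

end

/-- for `G = N ⋊ T` (internal semidirect product),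
`I(G) = I(N) ⊕ I(T) ⊕ I(N)I(T)` as abelian groups: the three additive subgroups sum
to `I(G)` and form an internal direct sum. -/
theorem stmt3 (G : Type*) [Group G] (N T : Subgroup G) [N.Normal]
    (hdisj : N ⊓ T = ⊥) (hjoin : N ⊔ T = ⊤) :
    relAug G N ⊔ relAug G T ⊔ relAug G N * relAug G T = augI G ∧
    relAug G N ⊓ (relAug G T ⊔ relAug G N * relAug G T) = ⊥ ∧
    relAug G T ⊓ (relAug G N ⊔ relAug G N * relAug G T) = ⊥ ∧
    (relAug G N * relAug G T) ⊓ (relAug G N ⊔ relAug G T) = ⊥ := by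
  have hc : N.IsComplement' T := Subgroup.isComplement'_of_disjoint_and_mul_eq_univ
    (disjoint_iff.mpr hdisj) (by rw [← Subgroup.normal_mul, hjoin, Subgroup.coe_top])
  exact ⟨hc.relAug_sup_relAug_sup_mul_eq_augI, hc.relAug_left_inf_eq_bot,
    hc.relAug_right_inf_eq_bot, hc.relAug_mul_relAug_inf_eq_bot⟩
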